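/- arXiv:2110.05388 — 13 statements merged into one kernel-verified Lean document; each statement's English description precedes it below -/
import Mathlib

section
/- Let P be a primary linear doctrine over a category C with finite products. The following are equivalent: (1) P is elementary; (2) for every object A of C there exists an element δ_A ∈ P(A×A) such that for every object X of C the monotone map P(X×A) → P(X×A×A) sending α to P(⟨π₁,π₂⟩)(α) ∗ P(⟨π₂,π₃⟩)(δ_A) is a left adjoint to the reindexing P(id_X × Δ_A) : P(X×A×A) → P(X×A), where Δ_A : A → A×A is the diagonal. -/
open CategoryTheory CategoryTheory.Limits

universe w v u

variable {C : Type u} [Category.{v} C]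

/-- A primary linear doctrine: a functor `P : Cᵒᵖ → Pos` (given by fibres `P X` and
monotone reindexings `re f`) together with a commutative-monoid structure
`(∗, κ) = (mul, unit)` on each fibre, preserved by reindexing. -/
structure PLDoctrine (P : C → Type w) [∀ X, PartialOrder (P X)] where
  re : ∀ {X Y : C}, (X ⟶ Y) → P Y → P X
  re_mono : ∀ {X Y : C} (f : X ⟶ Y), Monotone (re f)
  re_id : ∀ {X : C} (a : P X), re (𝟙 X) a = a
  re_comp : ∀ {X Y Z : C} (f : X ⟶ Y) (g : Y ⟶ Z) (a : P Z),
    re (f ≫ g) a = re f (re g a)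
  mul : ∀ {X : C}, P X → P X → P X
  unit : ∀ X : C, P X
  mul_mono : ∀ {X : C} {a b a' b' : P X}, a ≤ b → a' ≤ b' → mul a a' ≤ mul b b'
  mul_assoc : ∀ {X : C} (a b c : P X), mul (mul a b) c = mul a (mul b c)
  mul_comm : ∀ {X : C} (a b : P X), mul a b = mul b a
  mul_unit : ∀ {X : C} (a : P X), mul a (unit X) = a
  re_mul : ∀ {X Y : C} (f : X ⟶ Y) (a b : P Y),
    re f (mul a b) = mul (re f a) (re f b)
  re_unit : ∀ {X Y : C} (f : X ⟶ Y), re f (unit Y) = unit X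

variable [HasFiniteProducts C]

/-- The pairing `⟨π₁,π₂⟩` of the first two projections of a triple `(X × A) × B`. -/
noncomputable def proj12 (X A B : C) : (X ⨯ A) ⨯ B ⟶ X ⨯ A :=
  prod.lift (prod.fst ≫ prod.fst) (prod.fst ≫ prod.snd)

/-- The pairing `⟨π₂,π₃⟩` of the last two projections of a triple `(X × A) × B`. -/
noncomputable def proj23 (X A B : C) : (X ⨯ A) ⨯ B ⟶ A ⨯ B :=
  prod.lift (prod.fst ≫ prod.snd) prod.snd

/-- The pairing `⟨π₁,π₃⟩` of the outer projections of a triple `(X × A) × B`. -/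
noncomputable def proj13 (X A B : C) : (X ⨯ A) ⨯ B ⟶ X ⨯ B :=
  prod.lift (prod.fst ≫ prod.fst) prod.snd

/-- The pairing `⟨π₁,π₃⟩` of a quadruple `(A × B) × (A' × B')`. -/
noncomputable def proj13' (A B A' B' : C) : (A ⨯ B) ⨯ (A' ⨯ B') ⟶ A ⨯ A' :=
  prod.lift (prod.fst ≫ prod.fst) (prod.snd ≫ prod.fst)

/-- The pairing `⟨π₂,π₄⟩` of a quadruple `(A × B) × (A' × B')`. -/
noncomputable def proj24' (A B A' B' : C) : (A ⨯ B) ⨯ (A' ⨯ B') ⟶ B ⨯ B' :=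
  prod.lift (prod.fst ≫ prod.snd) (prod.snd ≫ prod.snd)

/-- A `P`-distance on an object `A`: a reflexive, symmetric and transitive element
of `P (A × A)`. -/
structure IsDistance {P : C → Type w} [∀ X, PartialOrder (P X)]
    (D : PLDoctrine P) (A : C) (ρ : P (A ⨯ A)) : Prop where
  refl : D.unit A ≤ D.re (diag A) ρ
  symm : ρ ≤ D.re (prod.lift prod.snd prod.fst) ρ
  trans : D.mul (D.re (proj12 A A A) ρ) (D.re (proj23 A A A) ρ) ≤ D.re (proj13 A A A) ρ

/-- An element is affine if it is below the monoidal unit. -/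
def IsAffine {P : C → Type w} [∀ X, PartialOrder (P X)]
    (D : PLDoctrine P) {A : C} (α : P A) : Prop :=
  α ≤ D.unit A

/-- An element is replicable if it is below its square. -/
def IsReplicable {P : C → Type w} [∀ X, PartialOrder (P X)]
    (D : PLDoctrine P) {A : C} (α : P A) : Prop :=
  α ≤ D.mul α α

/-- A primary linear doctrine is elementary if every object `A` has an equality
predicate `δ_A ∈ P (A × A)` which is reflexive and substitutive. -/
def IsElementary {P : C → Type w} [∀ X, PartialOrder (P X)] (D : PLDoctrine P) : Prop :=
  ∀ A : C, ∃ δA : P (A ⨯ A),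
    D.unit A ≤ D.re (diag A) δA ∧
    ∀ (X : C) (α : P (X ⨯ A)),
      D.mul (D.re (proj12 X A A) α) (D.re (proj23 X A A) δA) ≤ D.re (proj13 X A A) α

/-- `ρ ⊠ σ := P⟨π₁,π₃⟩(ρ) ∗ P⟨π₂,π₄⟩(σ)`. -/
noncomputable def boxProd {P : C → Type w} [∀ X, PartialOrder (P X)] (D : PLDoctrine P) {A B : C}
    (ρ : P (A ⨯ A)) (σ : P (B ⨯ B)) : P ((A ⨯ B) ⨯ (A ⨯ B)) :=
  D.mul (D.re (proj13' A B A B) ρ) (D.re (proj24' A B A B) σ)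

/-- A resource semiring: a partially ordered set with a commutative additive monoid
and a multiplicative monoid structure, multiplication distributing over addition and
absorbing zero, both operations monotone. -/
class ResourceSemiring (R : Type*) extends PartialOrder R, AddCommMonoid R, Monoid R where
  left_distrib : ∀ a b c : R, a * (b + c) = a * b + a * c
  right_distrib : ∀ a b c : R, (a + b) * c = a * c + b * c
  mul_zero : ∀ a : R, a * 0 = 0
  zero_mul : ∀ a : R, 0 * a = 0
  add_mono : ∀ {a b c d : R}, a ≤ b → c ≤ d → a + c ≤ b + d
  mul_mono : ∀ {a b c d : R}, a ≤ b → c ≤ d → a * c ≤ b * d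

/-- The conditions making a family `bang : R → P X → P X` an `R`-graded modality
on a primary linear doctrine. -/
def IsGradedModality (R : Type*) [ResourceSemiring R] {P : C → Type w}
    [∀ X, PartialOrder (P X)] (D : PLDoctrine P)
    (bang : R → ∀ {X : C}, P X → P X) : Prop :=
  (∀ (r : R) (X : C), Monotone (fun a : P X => bang r a)) ∧
  (∀ (r : R) (X Y : C) (f : X ⟶ Y) (a : P Y), D.re f (bang r a) = bang r (D.re f a)) ∧
  (∀ (r : R) (X : C), D.unit X ≤ bang r (D.unit X)) ∧
  (∀ (r : R) (X : C) (a b : P X), D.mul (bang r a) (bang r b) ≤ bang r (D.mul a b)) ∧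
  (∀ (X : C) (a : P X), bang (0 : R) a ≤ D.unit X) ∧
  (∀ (r s : R) (X : C) (a : P X), bang (r + s) a ≤ D.mul (bang r a) (bang s a)) ∧
  (∀ (X : C) (a : P X), bang (1 : R) a ≤ a) ∧
  (∀ (r s : R) (X : C) (a : P X), bang (r * s) a ≤ bang r (bang s a)) ∧
  (∀ (r s : R) (X : C) (a : P X), s ≤ r → bang r a ≤ bang s a)

/-- An `R`-graded doctrine: a primary linear doctrine with an `R`-graded modality. -/
structure GradedDoctrine (R : Type*) [ResourceSemiring R] (P : C → Type w)
    [∀ X, PartialOrder (P X)] extends PLDoctrine P where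
  bang : R → ∀ {X : C}, P X → P X
  bang_mono : ∀ (r : R) {X : C} {a b : P X}, a ≤ b → bang r a ≤ bang r b
  bang_natural : ∀ (r : R) {X Y : C} (f : X ⟶ Y) (a : P Y),
    re f (bang r a) = bang r (re f a)
  bang_unit : ∀ (r : R) (X : C), unit X ≤ bang r (unit X)
  bang_mul : ∀ (r : R) {X : C} (a b : P X),
    mul (bang r a) (bang r b) ≤ bang r (mul a b)
  bang_zero : ∀ {X : C} (a : P X), bang 0 a ≤ unit X
  bang_add : ∀ (r s : R) {X : C} (a : P X),
    bang (r + s) a ≤ mul (bang r a) (bang s a)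
  bang_counit : ∀ {X : C} (a : P X), bang 1 a ≤ a
  bang_comul : ∀ (r s : R) {X : C} (a : P X), bang (r * s) a ≤ bang r (bang s a)
  bang_contra : ∀ {r s : R} {X : C} (a : P X), s ≤ r → bang r a ≤ bang s a

/-- An `R`-Lipschitz doctrine structure on an `R`-graded doctrine: a family of
`P`-distances `δ_A` satisfying graded substitutivity (a), compatibility with binary
products (b), (c) and the terminal object (d). -/
structure IsLipschitz {R : Type*} [ResourceSemiring R] {P : C → Type w}
    [∀ X, PartialOrder (P X)] (G : GradedDoctrine R P)
    (δ : ∀ A : C, P (A ⨯ A)) : Prop where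
  dist : ∀ A : C, IsDistance G.toPLDoctrine A (δ A)
  subst : ∀ (X A : C) (α : P (X ⨯ A)), ∃ r : R,
    G.mul (G.re (proj12 X A A) α) (G.bang r (G.re (proj23 X A A) (δ A))) ≤
      G.re (proj13 X A A) α
  prod_eq : ∀ A X : C,
    δ (A ⨯ X) = G.mul (G.re (proj13' A X A X) (δ A)) (G.re (proj24' A X A X) (δ X))
  prod_le_left : ∀ A X : C, δ (A ⨯ X) ≤ G.re (proj13' A X A X) (δ A)
  prod_le_right : ∀ A X : C, δ (A ⨯ X) ≤ G.re (proj24' A X A X) (δ X)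
  unit_eq : δ (⊤_ C) = G.unit ((⊤_ C) ⨯ (⊤_ C))

/-- `r` tracks `f : (A,ρ) → (B,σ)` when `!_r ρ ≤ P(f×f)(σ)`. -/
def Tracks {R : Type*} [ResourceSemiring R] {P : C → Type w} [∀ X, PartialOrder (P X)]
    (G : GradedDoctrine R P) {A B : C} (ρ : P (A ⨯ A)) (σ : P (B ⨯ B))
    (f : A ⟶ B) (r : R) : Prop :=
  G.bang r ρ ≤ G.re (prod.map f f) σ

/-- `r ⊩_ρ α` : the graded descent-datum condition `P(π₁)(α) ∗ !_r ρ ≤ P(π₂)(α)`. -/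
def Forces {R : Type*} [ResourceSemiring R] {P : C → Type w} [∀ X, PartialOrder (P X)]
    (G : GradedDoctrine R P) {A : C} (ρ : P (A ⨯ A)) (r : R) (α : P A) : Prop :=
  G.mul (G.re (prod.fst : A ⨯ A ⟶ A) α) (G.bang r ρ) ≤
    G.re (prod.snd : A ⨯ A ⟶ A) α

/-- The `R`-graded descent data `Des_ρ(A)`. -/
def DescentData {R : Type*} [ResourceSemiring R] {P : C → Type w}
    [∀ X, PartialOrder (P X)] (G : GradedDoctrine R P) {A : C}
    (ρ : P (A ⨯ A)) : Set (P A) :=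
  {α | ∃ r : R, Forces G ρ r α}

/-- An element `α` is `!`-intuitionistic if `α ≤ !_r α` for all `r`. -/
def IsIntuitionistic {R : Type*} [ResourceSemiring R] {P : C → Type w}
    [∀ X, PartialOrder (P X)] (G : GradedDoctrine R P) {A : C} (α : P A) : Prop :=
  ∀ r : R, α ≤ G.bang r α

/-- The iterated monoidal product of a list of elements of a fibre. -/
def PLDoctrine.listMul {P : C → Type w} [∀ X, PartialOrder (P X)]
    (D : PLDoctrine P) {X : C} : List (P X) → P X
  | [] => D.unit X
  | a :: l => D.mul a (D.listMul l)

section Aux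

variable (X A : C)

/-- `d := ⟨𝟙, π₂⟩ : X⨯A ⟶ (X⨯A)⨯A`. -/
noncomputable def dmap : X ⨯ A ⟶ (X ⨯ A) ⨯ A :=
  prod.lift (𝟙 (X ⨯ A)) prod.snd

lemma d_p12 : dmap X A ≫ proj12 X A A = 𝟙 (X ⨯ A) := by
  ext <;> simp only [dmap, proj12, Category.assoc, Category.id_comp, Category.comp_id, prod.lift_fst, prod.lift_snd, prod.lift_fst_assoc, prod.lift_snd_assoc]

lemma d_p23 : dmap X A ≫ proj23 X A A = (prod.snd : X ⨯ A ⟶ A) ≫ diag A := by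
  ext <;> simp only [dmap, proj23, diag, Category.assoc, Category.id_comp, Category.comp_id, prod.lift_fst, prod.lift_snd, prod.lift_fst_assoc, prod.lift_snd_assoc]

lemma d_p13 : dmap X A ≫ proj13 X A A = 𝟙 (X ⨯ A) := by
  ext <;> simp only [dmap, proj13, Category.assoc, Category.id_comp, Category.comp_id, prod.lift_fst, prod.lift_snd, prod.lift_fst_assoc, prod.lift_snd_assoc]

/-- `w : (X⨯A)⨯A ⟶ ((X⨯A)⨯A)⨯A`, `(x,a,b) ↦ ((x,a,a),b)`. -/
noncomputable def wmap : (X ⨯ A) ⨯ A ⟶ ((X ⨯ A) ⨯ A) ⨯ A :=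
  prod.lift (prod.lift prod.fst (prod.fst ≫ prod.snd)) prod.snd

lemma w_p12 : wmap X A ≫ proj12 (X ⨯ A) A A = proj12 X A A ≫ dmap X A := by
  ext <;> simp only [wmap, dmap, proj12, Category.assoc, Category.id_comp, Category.comp_id, prod.lift_fst, prod.lift_snd, prod.lift_fst_assoc, prod.lift_snd_assoc]

lemma w_p23 : wmap X A ≫ proj23 (X ⨯ A) A A = proj23 X A A := by
  ext <;> simp only [wmap, proj23, Category.assoc, Category.id_comp, Category.comp_id, prod.lift_fst, prod.lift_snd, prod.lift_fst_assoc, prod.lift_snd_assoc]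

lemma w_p13 : wmap X A ≫ proj13 (X ⨯ A) A A = 𝟙 ((X ⨯ A) ⨯ A) := by
  ext <;> simp only [wmap, proj13, Category.assoc, Category.id_comp, Category.comp_id, prod.lift_fst, prod.lift_snd, prod.lift_fst_assoc, prod.lift_snd_assoc]

end Aux

/-- a primary linear doctrine is elementary iff for every object `A`
there is `δ_A ∈ P(A×A)` such that, for every `X`, the map
`α ↦ P⟨π₁,π₂⟩(α) ∗ P⟨π₂,π₃⟩(δ_A)` is left adjoint to reindexing along
`id_X × Δ_A : X × A ⟶ (X × A) × A`. -/
theorem statement0 {P : C → Type w} [∀ X, PartialOrder (P X)] (D : PLDoctrine P) :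
    IsElementary D ↔
      ∀ A : C, ∃ δA : P (A ⨯ A),
        ∀ (X : C) (α : P (X ⨯ A)) (β : P ((X ⨯ A) ⨯ A)),
          D.mul (D.re (proj12 X A A) α) (D.re (proj23 X A A) δA) ≤ β ↔
            α ≤ D.re (prod.lift (𝟙 (X ⨯ A)) (prod.snd : X ⨯ A ⟶ A)) β := by
  constructor
  · intro hE A
    obtain ⟨δA, hrefl, hsub⟩ := hE A
    refine ⟨δA, fun X α β => ⟨fun h => ?_, fun h => ?_⟩⟩
    · -- apply re (dmap X A) to h
      have h1 : D.re (dmap X A) (D.mul (D.re (proj12 X A A) α) (D.re (proj23 X A A) δA))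
          ≤ D.re (dmap X A) β := D.re_mono _ h
      have h2 : D.re (dmap X A) (D.mul (D.re (proj12 X A A) α) (D.re (proj23 X A A) δA))
          = D.mul α (D.re (prod.snd : X ⨯ A ⟶ A) (D.re (diag A) δA)) := by
        rw [D.re_mul, ← D.re_comp, ← D.re_comp, d_p12, d_p23, D.re_id, D.re_comp]
      have h3 : α ≤ D.mul α (D.re (prod.snd : X ⨯ A ⟶ A) (D.re (diag A) δA)) := by
        calc α = D.mul α (D.unit _) := (D.mul_unit α).symm
        _ ≤ _ := D.mul_mono le_rfl (by
            have := D.re_mono (prod.snd : X ⨯ A ⟶ A) hrefl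
            rwa [D.re_unit] at this)
      exact le_trans h3 (h2 ▸ h1)
    · -- use substitutivity at X ⨯ A with element β, reindexed along wmap
      have key := D.re_mono (wmap X A) (hsub (X ⨯ A) β)
      rw [D.re_mul, ← D.re_comp, ← D.re_comp, ← D.re_comp,
        w_p12, w_p23, w_p13, D.re_id, D.re_comp] at key
      refine le_trans ?_ key
      exact D.mul_mono (D.re_mono _ h) le_rfl
  · intro hAdj A
    obtain ⟨δA, hδ⟩ := hAdj A
    refine ⟨δA, ?_, fun X α => ?_⟩
    · -- reflexivity, via X := ⊤_C
      have h0 : D.mul (D.re (proj12 (⊤_ C) A A) (D.unit _)) (D.re (proj23 (⊤_ C) A A) δA)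
          ≤ D.mul (D.re (proj12 (⊤_ C) A A) (D.unit _)) (D.re (proj23 (⊤_ C) A A) δA) :=
        le_rfl
      have h1 := (hδ (⊤_ C) (D.unit _) _).mp h0
      have h2 : D.unit ((⊤_ C) ⨯ A) ≤
          D.re (prod.snd : (⊤_ C) ⨯ A ⟶ A) (D.re (diag A) δA) := by
        have e : D.re (dmap (⊤_ C) A)
            (D.mul (D.re (proj12 (⊤_ C) A A) (D.unit _)) (D.re (proj23 (⊤_ C) A A) δA))
            = D.mul (D.unit _) (D.re (prod.snd : (⊤_ C) ⨯ A ⟶ A) (D.re (diag A) δA)) := by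
          rw [D.re_mul, ← D.re_comp, ← D.re_comp, d_p12, d_p23, D.re_id, D.re_comp]
        have h1' : D.unit ((⊤_ C) ⨯ A) ≤
            D.mul (D.unit _) (D.re (prod.snd : (⊤_ C) ⨯ A ⟶ A) (D.re (diag A) δA)) := by
          rw [← e]; simpa [dmap] using h1
        calc D.unit ((⊤_ C) ⨯ A)
            ≤ D.mul (D.unit _) (D.re (prod.snd : (⊤_ C) ⨯ A ⟶ A) (D.re (diag A) δA)) := h1'
          _ = _ := by rw [D.mul_comm, D.mul_unit]
      -- reindex along i : A ⟶ ⊤ ⨯ A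
      have h3 := D.re_mono (prod.lift (terminal.from A) (𝟙 A)) h2
      rw [D.re_unit, ← D.re_comp] at h3
      have e2 : (prod.lift (terminal.from A) (𝟙 A) ≫ (prod.snd : (⊤_ C) ⨯ A ⟶ A)) = 𝟙 A := by
        exact prod.lift_snd _ _
      rwa [e2, D.re_id] at h3
    · -- substitutivity from the adjunction
      have h1 : α ≤ D.re (prod.lift (𝟙 (X ⨯ A)) (prod.snd : X ⨯ A ⟶ A))
          (D.re (proj13 X A A) α) := by
        have : (prod.lift (𝟙 (X ⨯ A)) (prod.snd : X ⨯ A ⟶ A)) ≫ proj13 X A A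
            = 𝟙 (X ⨯ A) := d_p13 X A
        rw [← D.re_comp, this, D.re_id]
      exact (hδ X α _).mpr h1
end

section
/- Let P be a primary linear doctrine and f : X → Y an arrow of the base category. If the reindexing P(f) : P(Y) → P(X) has a left adjoint E_f, then the element E_f(κ_X) ∈ P(Y) is affine and replicable. -/
open CategoryTheory CategoryTheory.Limits

universe w v u

variable {C : Type u} [Category.{v} C]

variable [HasFiniteProducts C]

/-- if reindexing `P(f)` has a left adjoint `E_f`, then `E_f(κ_X)` is
affine and replicable. -/
theorem statement2 {P : C → Type w} [∀ X, PartialOrder (P X)] (D : PLDoctrine P)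
    {X Y : C} (f : X ⟶ Y) (E : P X → P Y) (hE : Monotone E)
    (adj : ∀ (a : P X) (b : P Y), E a ≤ b ↔ a ≤ D.re f b) :
    IsAffine D (E (D.unit X)) ∧ IsReplicable D (E (D.unit X)) := by
  constructor
  · rw [IsAffine, adj, D.re_unit]
  · have h : D.unit X ≤ D.re f (E (D.unit X)) := (adj _ _).mp le_rfl
    rw [IsReplicable, adj, D.re_mul]
    calc D.unit X = D.mul (D.unit X) (D.unit X) := (D.mul_unit _).symm
      _ ≤ _ := D.mul_mono h h
end

section
/- Let P be a primary linear doctrine, R a resource semiring, and define !_r to be the identity natural transformation on P for every r ∈ |R|. Then ! is an R-graded modality on P if and only if, for every object X, κ_X is the greatest element of P(X) and every α ∈ P(X) satisfies α ≤ α ∗ α; in that case ∗_X is the binary meet of P(X), i.e. P is a primary doctrine. -/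
open CategoryTheory CategoryTheory.Limits

universe w v u

variable {C : Type u} [Category.{v} C]

variable [HasFiniteProducts C]

/-- the identity family is an `R`-graded modality on a primary linear
doctrine `P` iff every fibre has `κ` as greatest element and every element is
replicable; in that case `∗` is the binary meet in every fibre, i.e. `P` is a
primary doctrine. -/
theorem statement3 (R : Type*) [ResourceSemiring R]
    {P : C → Type w} [∀ X, PartialOrder (P X)] (D : PLDoctrine P) :
    (IsGradedModality R D (fun _ {X} a => a) ↔
      ∀ (X : C) (α : P X), α ≤ D.unit X ∧ α ≤ D.mul α α) ∧
    (IsGradedModality R D (fun _ {X} a => a) →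
      ∀ (X : C) (α β γ : P X), γ ≤ D.mul α β ↔ γ ≤ α ∧ γ ≤ β) := by
  have key : IsGradedModality R D (fun _ {X} a => a) →
      ∀ (X : C) (α : P X), α ≤ D.unit X ∧ α ≤ D.mul α α := by
    intro h X α
    obtain ⟨_, _, _, _, h0, hadd, _, _, _⟩ := h
    exact ⟨h0 X α, hadd 0 0 X α⟩
  constructor
  · constructor
    · exact key
    · intro h
      refine ⟨fun r X => monotone_id, fun _ _ _ _ _ => rfl, fun _ _ => le_refl _,
        fun _ _ _ _ => le_refl _, fun X a => (h X a).1, fun _ _ X a => (h X a).2,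
        fun _ _ => le_refl _, fun _ _ _ _ => le_refl _, fun _ _ _ _ _ => le_refl _⟩
  · intro h X α β γ
    have hc := key h X
    constructor
    · intro hle
      constructor
      · calc γ ≤ D.mul α β := hle
          _ ≤ D.mul α (D.unit X) := D.mul_mono le_rfl (hc β).1
          _ = α := D.mul_unit α
      · calc γ ≤ D.mul α β := hle
          _ = D.mul β α := D.mul_comm α β
          _ ≤ D.mul β (D.unit X) := D.mul_mono le_rfl (hc α).1
          _ = β := D.mul_unit β
    · rintro ⟨h1, h2⟩
      calc γ ≤ D.mul γ γ := (hc γ).2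
        _ ≤ D.mul α β := D.mul_mono h1 h2
end

section
/- Let (P, !) be an R-graded doctrine and let δ assign to every object A of the base a P-distance δ_A on A satisfying conditions (b), (c), (d) of the definition of R-Lipschitz doctrine. Then (P, !, δ) is an R-Lipschitz doctrine if and only if for every object A and every α ∈ P(A) there exists r ∈ |R| such that P(π₁)(α) ∗ !_r δ_A ≤ P(π₂)(α) holds in P(A×A). -/
open CategoryTheory CategoryTheory.Limits

universe w v u

variable {C : Type u} [Category.{v} C]

variable [HasFiniteProducts C]

/-- given a family of `P`-distances satisfying conditions (b), (c), (d)
of the definition of `R`-Lipschitz doctrine, the triple `(P, !, δ)` is `R`-Lipschitz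
iff for every object `A` and every `α ∈ P(A)` there is `r ∈ |R|` with
`P(π₁)(α) ∗ !_r δ_A ≤ P(π₂)(α)` in `P(A × A)`. -/
theorem statement4 {R : Type*} [ResourceSemiring R]
    {P : C → Type w} [∀ X, PartialOrder (P X)] (G : GradedDoctrine R P)
    (δ : ∀ A : C, P (A ⨯ A))
    (hdist : ∀ A : C, IsDistance G.toPLDoctrine A (δ A))
    (hb : ∀ A X : C,
      δ (A ⨯ X) = G.mul (G.re (proj13' A X A X) (δ A)) (G.re (proj24' A X A X) (δ X)))
    (hc₁ : ∀ A X : C, δ (A ⨯ X) ≤ G.re (proj13' A X A X) (δ A))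
    (hc₂ : ∀ A X : C, δ (A ⨯ X) ≤ G.re (proj24' A X A X) (δ X))
    (hd : δ (⊤_ C) = G.unit ((⊤_ C) ⨯ (⊤_ C))) :
    IsLipschitz G δ ↔
      ∀ (A : C) (α : P A), ∃ r : R,
        G.mul (G.re (prod.fst : A ⨯ A ⟶ A) α) (G.bang r (δ A)) ≤
          G.re (prod.snd : A ⨯ A ⟶ A) α := by
  constructor
  · intro hL A α
    obtain ⟨r, hr⟩ := hL.subst (⊤_ C) A (G.re (prod.snd : (⊤_ C) ⨯ A ⟶ A) α)
    refine ⟨r, ?_⟩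
    set g : A ⨯ A ⟶ ((⊤_ C) ⨯ A) ⨯ A :=
      prod.map (prod.lift (terminal.from A) (𝟙 A)) (𝟙 A) with hg
    have h12 : (g ≫ proj12 (⊤_ C) A A) ≫ (prod.snd : (⊤_ C) ⨯ A ⟶ A)
        = (prod.fst : A ⨯ A ⟶ A) := by
      simp [proj12, hg, prod.lift_fst, prod.lift_snd]
    have h23 : g ≫ proj23 (⊤_ C) A A = 𝟙 (A ⨯ A) := by
      apply Limits.prod.hom_ext <;> simp [proj23, hg, prod.lift_fst, prod.lift_snd]
    have h13 : (g ≫ proj13 (⊤_ C) A A) ≫ (prod.snd : (⊤_ C) ⨯ A ⟶ A)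
        = (prod.snd : A ⨯ A ⟶ A) := by
      simp [proj13, hg, prod.lift_fst, prod.lift_snd]
    have key := G.re_mono g hr
    rw [G.re_mul, G.bang_natural, ← G.re_comp, ← G.re_comp, h12,
      ← G.re_comp, h23, G.re_id, ← G.re_comp, ← G.re_comp, h13] at key
    exact key
  · intro h
    refine ⟨hdist, ?_, hb, hc₁, hc₂, hd⟩
    intro X A α
    obtain ⟨r, hr⟩ := h (X ⨯ A) α
    refine ⟨r, ?_⟩
    set k : (X ⨯ A) ⨯ A ⟶ (X ⨯ A) ⨯ (X ⨯ A) :=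
      prod.lift prod.fst (prod.lift (prod.fst ≫ prod.fst) prod.snd) with hk
    have e12 : proj12 X A A = (prod.fst : (X ⨯ A) ⨯ A ⟶ X ⨯ A) := by
      apply Limits.prod.hom_ext <;> simp [proj12, prod.lift_fst, prod.lift_snd]
    have hkfst : k ≫ (prod.fst : (X ⨯ A) ⨯ (X ⨯ A) ⟶ X ⨯ A)
        = (prod.fst : (X ⨯ A) ⨯ A ⟶ X ⨯ A) := by simp [hk, prod.lift_fst, prod.lift_snd]
    have hksnd : k ≫ (prod.snd : (X ⨯ A) ⨯ (X ⨯ A) ⟶ X ⨯ A) = proj13 X A A := by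
      simp [hk, proj13, prod.lift_fst, prod.lift_snd]
    have hk13 : k ≫ proj13' X A X A
        = (prod.fst ≫ prod.fst : (X ⨯ A) ⨯ A ⟶ X) ≫ diag X := by
      apply Limits.prod.hom_ext <;> simp [hk, proj13', diag, prod.lift_fst, prod.lift_snd]
    have hk24 : k ≫ proj24' X A X A = proj23 X A A := by
      apply Limits.prod.hom_ext <;> simp [hk, proj24', proj23, prod.lift_fst, prod.lift_snd]
    have key := G.re_mono k hr
    rw [G.re_mul, G.bang_natural, ← G.re_comp, hkfst, ← G.re_comp, hksnd,
      hb X A, G.re_mul, ← G.re_comp, hk13, ← G.re_comp, hk24, G.re_comp] at key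
    -- key : G.mul (G.re fst α)
    --   (G.bang r (G.mul (G.re (fst≫fst) (G.re (diag X) (δ X))) (G.re (proj23 X A A) (δ A))))
    --   ≤ G.re (proj13 X A A) α
    have hunit : G.re (proj23 X A A) (δ A) ≤
        G.mul (G.re (prod.fst ≫ prod.fst : (X ⨯ A) ⨯ A ⟶ X) (G.re (diag X) (δ X)))
          (G.re (proj23 X A A) (δ A)) := by
      have h1 : G.unit ((X ⨯ A) ⨯ A) ≤
          G.re (prod.fst ≫ prod.fst : (X ⨯ A) ⨯ A ⟶ X) (G.re (diag X) (δ X)) := by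
        have := G.re_mono (prod.fst ≫ prod.fst : (X ⨯ A) ⨯ A ⟶ X) (hdist X).refl
        rwa [G.re_unit] at this
      calc G.re (proj23 X A A) (δ A)
          = G.mul (G.unit _) (G.re (proj23 X A A) (δ A)) := by
            rw [G.mul_comm, G.mul_unit]
        _ ≤ _ := G.mul_mono h1 le_rfl
    rw [e12]
    exact le_trans (G.mul_mono le_rfl (G.bang_mono r hunit)) key
end

section
/- Let (P, !) be an R-graded doctrine and let δ assign to every object A of the base a P-distance δ_A on A. Then (P, !, δ) is an R-Lipschitz doctrine if and only if δ satisfies conditions (a) and (b) of the definition of R-Lipschitz doctrine and, for every object A, the element δ_A is affine. -/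
open CategoryTheory CategoryTheory.Limits

universe w v u

variable {C : Type u} [Category.{v} C]

variable [HasFiniteProducts C]

/-- given a family of `P`-distances `δ`, the triple `(P, !, δ)` is
`R`-Lipschitz iff `δ` satisfies conditions (a) and (b) and every `δ_A` is affine. -/
theorem statement5 {R : Type*} [ResourceSemiring R]
    {P : C → Type w} [∀ X, PartialOrder (P X)] (G : GradedDoctrine R P)
    (δ : ∀ A : C, P (A ⨯ A))
    (hdist : ∀ A : C, IsDistance G.toPLDoctrine A (δ A)) :
    IsLipschitz G δ ↔
      ((∀ (X A : C) (α : P (X ⨯ A)), ∃ r : R,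
          G.mul (G.re (proj12 X A A) α) (G.bang r (G.re (proj23 X A A) (δ A))) ≤
            G.re (proj13 X A A) α) ∧
        (∀ A X : C,
          δ (A ⨯ X) =
            G.mul (G.re (proj13' A X A X) (δ A)) (G.re (proj24' A X A X) (δ X))) ∧
        (∀ A : C, IsAffine G.toPLDoctrine (δ A))) := by
  constructor
  · intro h
    refine ⟨h.subst, h.prod_eq, fun A => ?_⟩
    -- δ A is affine
    set T := (⊤_ C)
    set i : A ⟶ A ⨯ T := prod.lift (𝟙 A) (terminal.from A) with hi
    set f : A ⨯ A ⟶ (A ⨯ T) ⨯ (A ⨯ T) := prod.map i i with hf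
    have h13 : f ≫ proj13' A T A T = 𝟙 (A ⨯ A) := by
      apply Limits.prod.hom_ext <;> simp [hf, hi, proj13'] <;> erw [prod.lift_fst, Category.comp_id]
    have key : G.re f (δ (A ⨯ T)) = δ A := by
      rw [h.prod_eq A T, h.unit_eq, G.re_unit, G.mul_unit,
        ← G.re_comp, h13, G.re_id]
    have : G.re f (δ (A ⨯ T)) ≤ G.re f (G.re (proj24' A T A T) (δ T)) :=
      G.re_mono f (h.prod_le_right A T)
    rw [key, ← G.re_comp, h.unit_eq, G.re_unit] at this
    exact this
  · rintro ⟨ha, hb, haff⟩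
    have prodL : ∀ A X : C, δ (A ⨯ X) ≤ G.re (proj13' A X A X) (δ A) := by
      intro A X
      rw [hb A X]
      calc G.mul (G.re (proj13' A X A X) (δ A)) (G.re (proj24' A X A X) (δ X))
          ≤ G.mul (G.re (proj13' A X A X) (δ A)) (G.unit _) := by
            apply G.mul_mono le_rfl
            have := G.re_mono (proj24' A X A X) (haff X)
            rwa [G.re_unit] at this
        _ = G.re (proj13' A X A X) (δ A) := G.mul_unit _
    have prodR : ∀ A X : C, δ (A ⨯ X) ≤ G.re (proj24' A X A X) (δ X) := by
      intro A X
      rw [hb A X, G.mul_comm]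
      calc G.mul (G.re (proj24' A X A X) (δ X)) (G.re (proj13' A X A X) (δ A))
          ≤ G.mul (G.re (proj24' A X A X) (δ X)) (G.unit _) := by
            apply G.mul_mono le_rfl
            have := G.re_mono (proj13' A X A X) (haff A)
            rwa [G.re_unit] at this
        _ = G.re (proj24' A X A X) (δ X) := G.mul_unit _
    refine ⟨hdist, ha, hb, prodL, prodR, ?_⟩
    apply le_antisymm (haff _)
    have hrefl := (hdist (⊤_ C)).refl
    have h1 := G.re_mono (terminal.from ((⊤_ C) ⨯ (⊤_ C))) hrefl
    rw [G.re_unit, ← G.re_comp] at h1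
    have hid : terminal.from ((⊤_ C) ⨯ (⊤_ C)) ≫ diag (⊤_ C) = 𝟙 _ := by
      apply Limits.prod.hom_ext <;> apply Subsingleton.elim
    rwa [hid, G.re_id] at h1
end

section
/- Let (P, !, δ) be an R-Lipschitz doctrine. For any arrow f : A₁×…×A_n → B in the base category, there exist r₁,…,r_n ∈ |R| such that !_{r₁} P(⟨π₁,π_{n+1}⟩)(δ_{A₁}) ∗ … ∗ !_{r_n} P(⟨π_n,π_{2n}⟩)(δ_{A_n}) ≤ P(f×f)(δ_B) holds in P((A₁×…×A_n)×(A₁×…×A_n)), where π₁,…,π_{2n} are the 2n projections of (A₁×…×A_n)×(A₁×…×A_n). -/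
open CategoryTheory CategoryTheory.Limits

universe w v u

variable {C : Type u} [Category.{v} C]

variable [HasFiniteProducts C]

section Aux6

variable {R : Type*} [ResourceSemiring R] {P : C → Type w} [∀ X, PartialOrder (P X)]

lemma aux_re_listMul (G : GradedDoctrine R P) {X Y : C} (f : X ⟶ Y) (l : List (P Y)) :
    G.re f (G.toPLDoctrine.listMul l) = G.toPLDoctrine.listMul (l.map (G.re f)) := by
  induction l with
  | nil => simp [PLDoctrine.listMul, G.re_unit]
  | cons a l ih => simp [PLDoctrine.listMul, G.re_mul, ih]

lemma aux_listMul_map_mono (G : GradedDoctrine R P) {X : C} {ι : Type*} (l : List ι)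
    {f g : ι → P X} (h : ∀ i, f i ≤ g i) :
    G.toPLDoctrine.listMul (l.map f) ≤ G.toPLDoctrine.listMul (l.map g) := by
  induction l with
  | nil => exact le_refl _
  | cons a l ih => exact G.mul_mono (h a) ih

lemma aux_bang_listMul (G : GradedDoctrine R P) (s : R) {X : C} (l : List (P X)) :
    G.toPLDoctrine.listMul (l.map (G.bang s)) ≤ G.bang s (G.toPLDoctrine.listMul l) := by
  induction l with
  | nil => simpa [PLDoctrine.listMul] using G.bang_unit s X
  | cons a l ih =>
    simp only [List.map_cons, PLDoctrine.listMul]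
    exact le_trans (G.mul_mono (le_refl _) ih) (G.bang_mul s a _)

lemma aux_lift_eq_map {A B : C} (g : A ⟶ B) :
    prod.lift (prod.fst ≫ g) (prod.snd ≫ g) = prod.map g g := by
  apply Limits.prod.hom_ext <;> simp

lemma aux_proj13' (A B : C) : proj13' A B A B = prod.map prod.fst prod.fst := by
  apply Limits.prod.hom_ext <;> simp [proj13']

lemma aux_proj24' (A B : C) : proj24' A B A B = prod.map prod.snd prod.snd := by
  apply Limits.prod.hom_ext <;> simp [proj24']

lemma aux_track (G : GradedDoctrine R P) (δ : ∀ A : C, P (A ⨯ A)) (hLip : IsLipschitz G δ)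
    {A B : C} (f : A ⟶ B) :
    ∃ r : R, G.bang r (δ A) ≤ G.re (prod.map f f) (δ B) := by
  obtain ⟨r, h⟩ := hLip.subst A A (G.re (prod.map f f) (δ B))
  refine ⟨r, ?_⟩
  set g : A ⨯ A ⟶ (A ⨯ A) ⨯ A := prod.lift (prod.lift prod.fst prod.fst) prod.snd with hg
  have e12 : g ≫ proj12 A A A = prod.lift prod.fst prod.fst := by
    apply Limits.prod.hom_ext <;> simp [hg, proj12, prod.lift_fst_assoc, prod.lift_snd_assoc, prod.lift_fst, prod.lift_snd]
  have e23 : g ≫ proj23 A A A = 𝟙 (A ⨯ A) := by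
    apply Limits.prod.hom_ext <;> simp [hg, proj23, prod.lift_fst_assoc, prod.lift_snd_assoc, prod.lift_fst, prod.lift_snd]
  have e13 : g ≫ proj13 A A A = 𝟙 (A ⨯ A) := by
    apply Limits.prod.hom_ext <;> simp [hg, proj13, prod.lift_fst_assoc, prod.lift_snd_assoc, prod.lift_fst, prod.lift_snd]
  have h2 := G.re_mono g h
  rw [G.re_mul, G.bang_natural, ← G.re_comp g (proj12 A A A), ← G.re_comp g (proj23 A A A),
    ← G.re_comp g (proj13 A A A), e12, e23, e13, G.re_id, G.re_id] at h2
  have ecomp : prod.lift (prod.fst : A ⨯ A ⟶ A) prod.fst ≫ prod.map f f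
      = (prod.fst ≫ f) ≫ diag B := by
    apply Limits.prod.hom_ext <;> simp
  have hu : G.unit (A ⨯ A) ≤ G.re (prod.lift prod.fst prod.fst) (G.re (prod.map f f) (δ B)) := by
    rw [← G.re_comp, ecomp, G.re_comp]
    calc G.unit (A ⨯ A) = G.re (prod.fst ≫ f) (G.unit B) := (G.re_unit _).symm
      _ ≤ _ := G.re_mono (prod.fst ≫ f) (hLip.dist B).refl
  calc G.bang r (δ A) = G.mul (G.bang r (δ A)) (G.unit _) := (G.mul_unit _).symm
    _ ≤ G.mul (G.bang r (δ A))
        (G.re (prod.lift prod.fst prod.fst) (G.re (prod.map f f) (δ B))) :=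
      G.mul_mono (le_refl _) hu
    _ = G.mul (G.re (prod.lift prod.fst prod.fst) (G.re (prod.map f f) (δ B)))
        (G.bang r (δ A)) := G.mul_comm _ _
    _ ≤ G.re (prod.map f f) (δ B) := h2

lemma aux_transport (G : GradedDoctrine R P) (δ : ∀ A : C, P (A ⨯ A)) (hLip : IsLipschitz G δ)
    {Z W : C} (h : Z ⟶ W) (i : W ⟶ Z) (hi : h ≫ i = 𝟙 Z) {β : P (W ⨯ W)} (hβ : β ≤ δ W) :
    ∃ s : R, G.bang s (G.re (prod.map h h) β) ≤ δ Z := by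
  obtain ⟨s, hs⟩ := aux_track G δ hLip i
  refine ⟨s, ?_⟩
  have h1 : G.bang s β ≤ G.re (prod.map i i) (δ Z) :=
    le_trans (G.bang_mono s hβ) hs
  have h2 := G.re_mono (prod.map h h) h1
  rw [G.bang_natural, ← G.re_comp, prod.map_map, hi, prod.map_id_id, G.re_id] at h2
  exact h2

lemma aux_key (G : GradedDoctrine R P) (δ : ∀ A : C, P (A ⨯ A)) (hLip : IsLipschitz G δ) :
    ∀ (n : ℕ) (A : Fin n → C), ∃ r : Fin n → R,
      G.toPLDoctrine.listMul ((List.finRange n).map fun i =>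
        G.bang (r i) (G.re (prod.map (Pi.π A i) (Pi.π A i)) (δ (A i))))
      ≤ δ (∏ᶜ A) := by
  intro n
  induction n with
  | zero =>
    intro A
    refine ⟨Fin.elim0, ?_⟩
    have hi : terminal.from (∏ᶜ A) ≫ Pi.lift (fun i => i.elim0) = 𝟙 (∏ᶜ A) :=
      Pi.hom_ext _ _ (fun i => i.elim0)
    obtain ⟨s, hs⟩ := aux_transport G δ hLip (terminal.from (∏ᶜ A)) (Pi.lift (fun i => i.elim0))
      hi (le_of_eq hLip.unit_eq.symm)
    rw [G.re_unit] at hs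
    have h0 : G.unit ((∏ᶜ A) ⨯ (∏ᶜ A)) ≤ δ (∏ᶜ A) :=
      le_trans (G.bang_unit s _) hs
    simpa [PLDoctrine.listMul] using h0
  | succ n ih =>
    intro A
    obtain ⟨r', hr'⟩ := ih (fun k => A k.succ)
    set eh : (∏ᶜ A) ⟶ (A 0) ⨯ (∏ᶜ fun k : Fin n => A k.succ) :=
      prod.lift (Pi.π A 0) (Pi.lift fun k => Pi.π A k.succ) with heh
    set ei : ((A 0) ⨯ (∏ᶜ fun k : Fin n => A k.succ)) ⟶ ∏ᶜ A :=
      Pi.lift (fun i => Fin.cases prod.fst (fun k => prod.snd ≫ Pi.π (fun m => A m.succ) k) i)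
      with hei
    have hcomp : eh ≫ ei = 𝟙 (∏ᶜ A) := by
      apply Pi.hom_ext
      intro i
      induction i using Fin.cases with
      | zero => simp [heh, hei, prod.lift_fst_assoc, prod.lift_snd_assoc, prod.lift_fst, prod.lift_snd]
      | succ j => simp [heh, hei, prod.lift_fst_assoc, prod.lift_snd_assoc, prod.lift_fst, prod.lift_snd]
    set L' : List (P ((∏ᶜ fun k : Fin n => A k.succ) ⨯ (∏ᶜ fun k : Fin n => A k.succ))) :=
      (List.finRange n).map fun (j : Fin n) =>
        G.bang (r' j) (G.re (prod.map (Pi.π (fun k => A k.succ) j) (Pi.π (fun k => A k.succ) j))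
          (δ (A j.succ))) with hL'
    set β : P (((A 0) ⨯ (∏ᶜ fun k : Fin n => A k.succ)) ⨯ ((A 0) ⨯ (∏ᶜ fun k : Fin n => A k.succ))) :=
      G.mul (G.re (prod.map prod.fst prod.fst) (δ (A 0)))
        (G.re (prod.map prod.snd prod.snd) (G.toPLDoctrine.listMul L')) with hβdef
    have hβ : β ≤ δ ((A 0) ⨯ (∏ᶜ fun k : Fin n => A k.succ)) := by
      rw [hLip.prod_eq (A 0) (∏ᶜ fun k : Fin n => A k.succ), aux_proj13', aux_proj24']
      exact G.mul_mono (le_refl _) (G.re_mono _ hr')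
    obtain ⟨s, hs⟩ := aux_transport G δ hLip eh ei hcomp hβ
    have hfst : eh ≫ prod.fst = Pi.π A 0 := by simp [heh, prod.lift_fst_assoc, prod.lift_snd_assoc, prod.lift_fst, prod.lift_snd]
    have hsnd : ∀ j : Fin n, (eh ≫ prod.snd) ≫ Pi.π (fun k => A k.succ) j = Pi.π A (j.succ) := by
      intro j; simp [heh, prod.lift_fst_assoc, prod.lift_snd_assoc, prod.lift_fst, prod.lift_snd]
    have hre : G.re (prod.map eh eh) β =
        G.mul (G.re (prod.map (Pi.π A 0) (Pi.π A 0)) (δ (A 0)))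
          (G.toPLDoctrine.listMul ((List.finRange n).map fun j =>
            G.bang (r' j) (G.re (prod.map (Pi.π A j.succ) (Pi.π A j.succ)) (δ (A j.succ))))) := by
      rw [hβdef, G.re_mul, ← G.re_comp, ← G.re_comp, prod.map_map, prod.map_map, hfst,
        aux_re_listMul, hL', List.map_map]
      refine congrArg₂ G.mul rfl (congrArg G.toPLDoctrine.listMul ?_)
      refine List.map_congr_left (fun j _ => ?_)
      simp only [Function.comp]
      rw [G.bang_natural, ← G.re_comp, prod.map_map, hsnd j]
    rw [hre] at hs
    refine ⟨Fin.cases s (fun j => s * r' j), ?_⟩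
    rw [List.finRange_succ, List.map_cons, List.map_map]
    simp only [PLDoctrine.listMul, Fin.cases_zero]
    have step1 : G.toPLDoctrine.listMul ((List.finRange n).map
          ((fun i => G.bang (Fin.cases s (fun j => s * r' j) i)
            (G.re (prod.map (Pi.π A i) (Pi.π A i)) (δ (A i)))) ∘ Fin.succ))
        ≤ G.toPLDoctrine.listMul ((List.finRange n).map
          (fun j => G.bang s (G.bang (r' j)
            (G.re (prod.map (Pi.π A j.succ) (Pi.π A j.succ)) (δ (A j.succ)))))) := by
      apply aux_listMul_map_mono
      intro j
      simp only [Function.comp_apply, Fin.cases_succ]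
      exact G.bang_comul s (r' j) _
    have step2 : G.toPLDoctrine.listMul ((List.finRange n).map
          (fun j => G.bang s (G.bang (r' j)
            (G.re (prod.map (Pi.π A j.succ) (Pi.π A j.succ)) (δ (A j.succ))))))
        ≤ G.bang s (G.toPLDoctrine.listMul ((List.finRange n).map
          (fun j => G.bang (r' j)
            (G.re (prod.map (Pi.π A j.succ) (Pi.π A j.succ)) (δ (A j.succ)))))) := by
      have := aux_bang_listMul G s ((List.finRange n).map (fun j => G.bang (r' j)
        (G.re (prod.map (Pi.π A j.succ) (Pi.π A j.succ)) (δ (A j.succ)))))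
      rwa [List.map_map] at this
    calc G.mul (G.bang s (G.re (prod.map (Pi.π A 0) (Pi.π A 0)) (δ (A 0))))
          (G.toPLDoctrine.listMul ((List.finRange n).map
            ((fun i => G.bang (Fin.cases s (fun j => s * r' j) i)
              (G.re (prod.map (Pi.π A i) (Pi.π A i)) (δ (A i)))) ∘ Fin.succ)))
        ≤ G.mul (G.bang s (G.re (prod.map (Pi.π A 0) (Pi.π A 0)) (δ (A 0))))
            (G.bang s (G.toPLDoctrine.listMul ((List.finRange n).map
              (fun j => G.bang (r' j)
                (G.re (prod.map (Pi.π A j.succ) (Pi.π A j.succ)) (δ (A j.succ))))))) :=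
          G.mul_mono (le_refl _) (le_trans step1 step2)
      _ ≤ G.bang s (G.mul (G.re (prod.map (Pi.π A 0) (Pi.π A 0)) (δ (A 0)))
            (G.toPLDoctrine.listMul ((List.finRange n).map
              (fun j => G.bang (r' j)
                (G.re (prod.map (Pi.π A j.succ) (Pi.π A j.succ)) (δ (A j.succ))))))) :=
          G.bang_mul s _ _
      _ ≤ δ (∏ᶜ A) := hs

end Aux6

/-- in an `R`-Lipschitz doctrine, for any arrow `f : A₁ × … × A_n ⟶ B`
there are grades `r₁, …, r_n` with
`!_{r₁} P⟨π₁,π_{n+1}⟩(δ_{A₁}) ∗ … ∗ !_{r_n} P⟨π_n,π_{2n}⟩(δ_{A_n}) ≤ P(f×f)(δ_B)`. -/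
theorem statement6 {R : Type*} [ResourceSemiring R]
    {P : C → Type w} [∀ X, PartialOrder (P X)] (G : GradedDoctrine R P)
    (δ : ∀ A : C, P (A ⨯ A)) (hLip : IsLipschitz G δ)
    {n : ℕ} (A : Fin n → C) (B : C) (f : (∏ᶜ A) ⟶ B) :
    ∃ r : Fin n → R,
      G.toPLDoctrine.listMul
          ((List.finRange n).map fun i =>
            G.bang (r i)
              (G.re (prod.lift (prod.fst ≫ Pi.π A i) (prod.snd ≫ Pi.π A i)) (δ (A i))))
        ≤ G.re (prod.map f f) (δ B) := by
  obtain ⟨r', hr'⟩ := aux_key G δ hLip n A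
  obtain ⟨s, hs⟩ := aux_track G δ hLip f
  refine ⟨fun i => s * r' i, ?_⟩
  have hmor : ∀ i : Fin n, prod.lift (prod.fst ≫ Pi.π A i) (prod.snd ≫ Pi.π A i)
      = prod.map (Pi.π A i) (Pi.π A i) := fun i => aux_lift_eq_map (Pi.π A i)
  simp only [hmor]
  have step1 : G.toPLDoctrine.listMul ((List.finRange n).map fun i =>
        G.bang (s * r' i) (G.re (prod.map (Pi.π A i) (Pi.π A i)) (δ (A i))))
      ≤ G.toPLDoctrine.listMul ((List.finRange n).map fun i =>
        G.bang s (G.bang (r' i) (G.re (prod.map (Pi.π A i) (Pi.π A i)) (δ (A i))))) :=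
    aux_listMul_map_mono G _ (fun i => G.bang_comul s (r' i) _)
  have step2 : G.toPLDoctrine.listMul ((List.finRange n).map fun i =>
        G.bang s (G.bang (r' i) (G.re (prod.map (Pi.π A i) (Pi.π A i)) (δ (A i)))))
      ≤ G.bang s (G.toPLDoctrine.listMul ((List.finRange n).map fun i =>
        G.bang (r' i) (G.re (prod.map (Pi.π A i) (Pi.π A i)) (δ (A i))))) := by
    have := aux_bang_listMul G s ((List.finRange n).map fun i =>
      G.bang (r' i) (G.re (prod.map (Pi.π A i) (Pi.π A i)) (δ (A i))))
    rwa [List.map_map] at this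
  exact le_trans step1 (le_trans step2 (le_trans (G.bang_mono s hr') hs))
end

section
/- Let (P, !, δ) be an R-Lipschitz doctrine. For any arrow f : A → B in the base category, there exists r ∈ |R| such that !_r δ_A ≤ P(f×f)(δ_B) holds in P(A×A). -/
open CategoryTheory CategoryTheory.Limits

universe w v u

variable {C : Type u} [Category.{v} C]

variable [HasFiniteProducts C]

/-- in an `R`-Lipschitz doctrine, every arrow `f : A ⟶ B` of the base is
Lipschitz: there is `r ∈ |R|` with `!_r δ_A ≤ P(f×f)(δ_B)`. -/
theorem statement7 {R : Type*} [ResourceSemiring R]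
    {P : C → Type w} [∀ X, PartialOrder (P X)] (G : GradedDoctrine R P)
    (δ : ∀ A : C, P (A ⨯ A)) (hLip : IsLipschitz G δ)
    {A B : C} (f : A ⟶ B) :
    ∃ r : R, G.bang r (δ A) ≤ G.re (prod.map f f) (δ B) := by
  obtain ⟨r, h⟩ := hLip.subst A A (G.re (prod.map f f) (δ B))
  refine ⟨r, ?_⟩
  set α := G.re (prod.map f f) (δ B) with hα
  set g : A ⨯ A ⟶ (A ⨯ A) ⨯ A := prod.lift (prod.lift prod.fst prod.fst) prod.snd with hg
  have e1 : g ≫ proj12 A A A = prod.fst ≫ diag A := by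
    apply Limits.prod.hom_ext <;> simp [hg, proj12, diag, prod.lift_fst, prod.lift_snd, prod.lift_fst_assoc, prod.lift_snd_assoc]
  have e2 : g ≫ proj23 A A A = 𝟙 (A ⨯ A) := by
    apply Limits.prod.hom_ext <;> simp [hg, proj23, prod.lift_fst, prod.lift_snd, prod.lift_fst_assoc, prod.lift_snd_assoc]
  have e3 : g ≫ proj13 A A A = 𝟙 (A ⨯ A) := by
    apply Limits.prod.hom_ext <;> simp [hg, proj13, prod.lift_fst, prod.lift_snd, prod.lift_fst_assoc, prod.lift_snd_assoc]
  have h2 := G.re_mono g h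
  rw [G.re_mul] at h2
  have t1 : G.re g (G.re (proj12 A A A) α) = G.re (prod.fst ≫ diag A) α := by
    rw [← G.re_comp, e1]
  have t2 : G.re g (G.bang r (G.re (proj23 A A A) (δ A))) = G.bang r (δ A) := by
    rw [G.bang_natural, ← G.re_comp, e2, G.re_id]
  have t3 : G.re g (G.re (proj13 A A A) α) = α := by
    rw [← G.re_comp, e3, G.re_id]
  rw [t1, t2, t3] at h2
  have e4 : ((prod.fst : A ⨯ A ⟶ A) ≫ diag A) ≫ prod.map f f =
      ((prod.fst : A ⨯ A ⟶ A) ≫ f) ≫ diag B := by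
    apply Limits.prod.hom_ext <;> simp [diag]
  have hrefl : G.unit (A ⨯ A) ≤ G.re ((prod.fst : A ⨯ A ⟶ A) ≫ diag A) α := by
    calc G.unit (A ⨯ A) = G.re (prod.fst ≫ f : A ⨯ A ⟶ B) (G.unit B) := (G.re_unit _).symm
      _ ≤ G.re ((prod.fst : A ⨯ A ⟶ A) ≫ f) (G.re (diag B) (δ B)) := G.re_mono _ ((hLip.dist B).refl)
      _ = G.re (((prod.fst : A ⨯ A ⟶ A) ≫ f) ≫ diag B) (δ B) := (G.re_comp _ _ _).symm
      _ = G.re ((prod.fst : A ⨯ A ⟶ A) ≫ diag A) α := by rw [← e4, G.re_comp, hα]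
  calc G.bang r (δ A)
      = G.mul (G.bang r (δ A)) (G.unit _) := (G.mul_unit _).symm
    _ = G.mul (G.unit _) (G.bang r (δ A)) := G.mul_comm _ _
    _ ≤ G.mul (G.re ((prod.fst : A ⨯ A ⟶ A) ≫ diag A) α) (G.bang r (δ A)) := G.mul_mono hrefl le_rfl
    _ ≤ α := h2
end

section
/- Let (P, !) be an R-graded doctrine and f : X → Y an arrow of the base category. If the reindexing P(f) : P(Y) → P(X) has a left adjoint E_f, then the element E_f(κ_X) ∈ P(Y) is !-intuitionistic, i.e. E_f(κ_X) ≤ !_r E_f(κ_X) for every r ∈ |R|. -/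
open CategoryTheory CategoryTheory.Limits

universe w v u

variable {C : Type u} [Category.{v} C]

variable [HasFiniteProducts C]

/-- in an `R`-graded doctrine, if reindexing `P(f)` has a left adjoint
`E_f`, then `E_f(κ_X)` is `!`-intuitionistic. -/
theorem statement8 {R : Type*} [ResourceSemiring R]
    {P : C → Type w} [∀ X, PartialOrder (P X)] (G : GradedDoctrine R P)
    {X Y : C} (f : X ⟶ Y) (E : P X → P Y) (hE : Monotone E)
    (adj : ∀ (a : P X) (b : P Y), E a ≤ b ↔ a ≤ G.re f b) :
    IsIntuitionistic G (E (G.unit X)) := by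
  intro r
  rw [adj, G.bang_natural]
  exact le_trans (G.bang_unit r X) (G.bang_mono r ((adj _ _).mp le_rfl))
end

section
/- Let (P, !) be an R-graded doctrine. The category Met(P, !) has finite products: the pair (1, κ_{1×1}), where 1 is a terminal object of the base, is terminal in Met(P, !) (the unique map to 1 is tracked by 0); and for objects (A, ρ) and (B, σ), the pair (A×B, ρ ⊠ σ) with the projections of A×B (each tracked by 1) is a binary product of (A, ρ) and (B, σ): if r tracks f : (C, τ) → (A, ρ) and s tracks g : (C, τ) → (B, σ), then r+s tracks the pairing ⟨f,g⟩ : (C, τ) → (A×B, ρ ⊠ σ). -/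
open CategoryTheory CategoryTheory.Limits

universe w v u

variable {C : Type u} [Category.{v} C]

variable [HasFiniteProducts C]

section Aux

variable {P : C → Type w} [∀ X, PartialOrder (P X)] (D : PLDoctrine P)

lemma PLD.unit_mul {X : C} (a : P X) : D.mul (D.unit X) a = a := by
  rw [D.mul_comm, D.mul_unit]

lemma PLD.mul_mul_mul_comm {X : C} (a b c d : P X) :
    D.mul (D.mul a b) (D.mul c d) = D.mul (D.mul a c) (D.mul b d) := by
  rw [D.mul_assoc, D.mul_assoc, ← D.mul_assoc b c d, ← D.mul_assoc c b d,
    D.mul_comm b c]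

lemma PLD.re_unit_le {X Y : C} (f : X ⟶ Y) {a : P Y} (h : a ≤ D.unit Y) :
    D.re f a ≤ D.unit X := by
  have := D.re_mono f h
  rwa [D.re_unit] at this

/-- `⟨f,g⟩ × ⟨f,g⟩` followed by `⟨π₁,π₃⟩` is `f × f`. -/
lemma aux_lift_map13 {Z A B : C} (f : Z ⟶ A) (g : Z ⟶ B) :
    prod.map (prod.lift f g) (prod.lift f g) ≫ proj13' A B A B = prod.map f f := by
  apply Limits.prod.hom_ext <;> simp [proj13'] <;> simp only [prod.lift_fst, prod.lift_snd, prod.lift_fst_assoc, prod.lift_snd_assoc]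

lemma aux_lift_map24 {Z A B : C} (f : Z ⟶ A) (g : Z ⟶ B) :
    prod.map (prod.lift f g) (prod.lift f g) ≫ proj24' A B A B = prod.map g g := by
  apply Limits.prod.hom_ext <;> simp [proj24'] <;> simp only [prod.lift_fst, prod.lift_snd, prod.lift_fst_assoc, prod.lift_snd_assoc]

lemma aux_diag13 (A B : C) :
    diag (A ⨯ B) ≫ proj13' A B A B = prod.fst ≫ diag A := by
  apply Limits.prod.hom_ext <;> simp [proj13']

lemma aux_diag24 (A B : C) :
    diag (A ⨯ B) ≫ proj24' A B A B = prod.snd ≫ diag B := by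
  apply Limits.prod.hom_ext <;> simp [proj24']

lemma aux_swap13 (A B : C) :
    (prod.lift prod.snd prod.fst : (A ⨯ B) ⨯ (A ⨯ B) ⟶ _) ≫ proj13' A B A B =
      proj13' A B A B ≫ prod.lift prod.snd prod.fst := by
  apply Limits.prod.hom_ext <;> simp [proj13']

lemma aux_swap24 (A B : C) :
    (prod.lift prod.snd prod.fst : (A ⨯ B) ⨯ (A ⨯ B) ⟶ _) ≫ proj24' A B A B =
      proj24' A B A B ≫ prod.lift prod.snd prod.fst := by
  apply Limits.prod.hom_ext <;> simp [proj24']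

/-- The map collecting the three `A`-components of a triple of pairs. -/
noncomputable def trA (A B : C) : ((A ⨯ B) ⨯ (A ⨯ B)) ⨯ (A ⨯ B) ⟶ (A ⨯ A) ⨯ A :=
  prod.lift (prod.lift (prod.fst ≫ prod.fst ≫ prod.fst)
    (prod.fst ≫ prod.snd ≫ prod.fst)) (prod.snd ≫ prod.fst)

/-- The map collecting the three `B`-components of a triple of pairs. -/
noncomputable def trB (A B : C) : ((A ⨯ B) ⨯ (A ⨯ B)) ⨯ (A ⨯ B) ⟶ (B ⨯ B) ⨯ B :=
  prod.lift (prod.lift (prod.fst ≫ prod.fst ≫ prod.snd)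
    (prod.fst ≫ prod.snd ≫ prod.snd)) (prod.snd ≫ prod.snd)

lemma aux_trA12 (A B : C) :
    proj12 (A ⨯ B) (A ⨯ B) (A ⨯ B) ≫ proj13' A B A B = trA A B ≫ proj12 A A A := by
  apply Limits.prod.hom_ext <;> simp [proj12, proj13', trA] <;> simp only [prod.lift_fst, prod.lift_snd, prod.lift_fst_assoc, prod.lift_snd_assoc]

lemma aux_trA23 (A B : C) :
    proj23 (A ⨯ B) (A ⨯ B) (A ⨯ B) ≫ proj13' A B A B = trA A B ≫ proj23 A A A := by
  apply Limits.prod.hom_ext <;> simp [proj23, proj13', trA] <;> simp only [prod.lift_fst, prod.lift_snd, prod.lift_fst_assoc, prod.lift_snd_assoc]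

lemma aux_trA13 (A B : C) :
    proj13 (A ⨯ B) (A ⨯ B) (A ⨯ B) ≫ proj13' A B A B = trA A B ≫ proj13 A A A := by
  apply Limits.prod.hom_ext <;> simp [proj13, proj13', trA] <;> simp only [prod.lift_fst, prod.lift_snd, prod.lift_fst_assoc, prod.lift_snd_assoc]

lemma aux_trB12 (A B : C) :
    proj12 (A ⨯ B) (A ⨯ B) (A ⨯ B) ≫ proj24' A B A B = trB A B ≫ proj12 B B B := by
  apply Limits.prod.hom_ext <;> simp [proj12, proj24', trB] <;> simp only [prod.lift_fst, prod.lift_snd, prod.lift_fst_assoc, prod.lift_snd_assoc]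

lemma aux_trB23 (A B : C) :
    proj23 (A ⨯ B) (A ⨯ B) (A ⨯ B) ≫ proj24' A B A B = trB A B ≫ proj23 B B B := by
  apply Limits.prod.hom_ext <;> simp [proj23, proj24', trB] <;> simp only [prod.lift_fst, prod.lift_snd, prod.lift_fst_assoc, prod.lift_snd_assoc]

lemma aux_trB13 (A B : C) :
    proj13 (A ⨯ B) (A ⨯ B) (A ⨯ B) ≫ proj24' A B A B = trB A B ≫ proj13 B B B := by
  apply Limits.prod.hom_ext <;> simp [proj13, proj24', trB] <;> simp only [prod.lift_fst, prod.lift_snd, prod.lift_fst_assoc, prod.lift_snd_assoc]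

lemma aux_map13 (A B : C) :
    (prod.map prod.fst prod.fst : (A ⨯ B) ⨯ (A ⨯ B) ⟶ A ⨯ A) = proj13' A B A B := by
  apply Limits.prod.hom_ext <;> simp [proj13']

lemma aux_map24 (A B : C) :
    (prod.map prod.snd prod.snd : (A ⨯ B) ⨯ (A ⨯ B) ⟶ B ⨯ B) = proj24' A B A B := by
  apply Limits.prod.hom_ext <;> simp [proj24']

end Aux

/-- `Met(P,!)` has finite products: `(1, κ_{1×1})` is an object which
is terminal (the unique base map to `1` is tracked by `0`), and for objects `(A,ρ)`,
`(B,σ)` the pair `(A × B, ρ ⊠ σ)` with the projections (each tracked by `1`) is a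
binary product: if `r` tracks `f` and `s` tracks `g` then `r + s` tracks `⟨f,g⟩`. -/
theorem statement13 {R : Type*} [ResourceSemiring R]
    {P : C → Type w} [∀ X, PartialOrder (P X)] (G : GradedDoctrine R P) :
    (IsDistance G.toPLDoctrine (⊤_ C) (G.unit ((⊤_ C) ⨯ (⊤_ C))) ∧
      IsAffine G.toPLDoctrine (G.unit ((⊤_ C) ⨯ (⊤_ C)))) ∧
    (∀ (A : C) (ρ : P (A ⨯ A)), IsDistance G.toPLDoctrine A ρ →
      IsAffine G.toPLDoctrine ρ →
        Tracks G ρ (G.unit ((⊤_ C) ⨯ (⊤_ C))) (terminal.from A) 0 ∧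
          ∀ g : A ⟶ ⊤_ C, g = terminal.from A) ∧
    (∀ (A B : C) (ρ : P (A ⨯ A)) (σ : P (B ⨯ B)),
      IsDistance G.toPLDoctrine A ρ → IsAffine G.toPLDoctrine ρ →
      IsDistance G.toPLDoctrine B σ → IsAffine G.toPLDoctrine σ →
        (IsDistance G.toPLDoctrine (A ⨯ B) (boxProd G.toPLDoctrine ρ σ) ∧
          IsAffine G.toPLDoctrine (boxProd G.toPLDoctrine ρ σ)) ∧
        Tracks G (boxProd G.toPLDoctrine ρ σ) ρ (prod.fst : A ⨯ B ⟶ A) 1 ∧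
        Tracks G (boxProd G.toPLDoctrine ρ σ) σ (prod.snd : A ⨯ B ⟶ B) 1 ∧
        ∀ (Z : C) (τ : P (Z ⨯ Z)), IsDistance G.toPLDoctrine Z τ →
          IsAffine G.toPLDoctrine τ →
          ∀ (f : Z ⟶ A) (g : Z ⟶ B) (r s : R),
            Tracks G τ ρ f r → Tracks G τ σ g s →
              Tracks G τ (boxProd G.toPLDoctrine ρ σ) (prod.lift f g) (r + s)) := by
  set D := G.toPLDoctrine with hD
  refine ⟨⟨⟨?_, ?_, ?_⟩, le_refl _⟩, ?_, ?_⟩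
  · rw [D.re_unit]
  · rw [D.re_unit]
  · rw [D.re_unit, D.re_unit, D.re_unit, D.mul_unit]
  · intro A ρ _ _
    refine ⟨?_, fun g => Subsingleton.elim _ _⟩
    unfold Tracks
    rw [D.re_unit]
    exact G.bang_zero ρ
  · intro A B ρ σ hρ hρa hσ hσa
    have box_le_l : boxProd D ρ σ ≤ D.re (proj13' A B A B) ρ := by
      calc boxProd D ρ σ ≤ D.mul (D.re (proj13' A B A B) ρ) (D.unit _) :=
            D.mul_mono (le_refl _) (PLD.re_unit_le D _ hσa)
        _ = _ := D.mul_unit _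
    have box_le_r : boxProd D ρ σ ≤ D.re (proj24' A B A B) σ := by
      calc boxProd D ρ σ ≤ D.mul (D.unit _) (D.re (proj24' A B A B) σ) :=
            D.mul_mono (PLD.re_unit_le D _ hρa) (le_refl _)
        _ = _ := PLD.unit_mul D _
    refine ⟨⟨⟨?_, ?_, ?_⟩, ?_⟩, ?_, ?_, ?_⟩
    · -- reflexivity
      have h1 : D.unit (A ⨯ B) ≤ D.re (diag (A ⨯ B)) (D.re (proj13' A B A B) ρ) := by
        rw [← D.re_comp, aux_diag13, D.re_comp]
        calc D.unit (A ⨯ B) = D.re (prod.fst : A ⨯ B ⟶ A) (D.unit A) := (D.re_unit _).symm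
          _ ≤ _ := D.re_mono _ hρ.refl
      have h2 : D.unit (A ⨯ B) ≤ D.re (diag (A ⨯ B)) (D.re (proj24' A B A B) σ) := by
        rw [← D.re_comp, aux_diag24, D.re_comp]
        calc D.unit (A ⨯ B) = D.re (prod.snd : A ⨯ B ⟶ B) (D.unit B) := (D.re_unit _).symm
          _ ≤ _ := D.re_mono _ hσ.refl
      calc D.unit (A ⨯ B) = D.mul (D.unit _) (D.unit _) := (D.mul_unit _).symm
        _ ≤ _ := by
            rw [boxProd, D.re_mul]
            exact D.mul_mono h1 h2
    · -- symmetry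
      rw [boxProd, D.re_mul, ← D.re_comp, ← D.re_comp, aux_swap13, aux_swap24,
        D.re_comp, D.re_comp]
      exact D.mul_mono (D.re_mono _ hρ.symm) (D.re_mono _ hσ.symm)
    · -- transitivity
      have hA : D.mul (D.re (trA A B) (D.re (proj12 A A A) ρ))
          (D.re (trA A B) (D.re (proj23 A A A) ρ)) ≤
            D.re (trA A B) (D.re (proj13 A A A) ρ) := by
        rw [← D.re_mul]; exact D.re_mono _ hρ.trans
      have hB : D.mul (D.re (trB A B) (D.re (proj12 B B B) σ))
          (D.re (trB A B) (D.re (proj23 B B B) σ)) ≤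
            D.re (trB A B) (D.re (proj13 B B B) σ) := by
        rw [← D.re_mul]; exact D.re_mono _ hσ.trans
      rw [boxProd, D.re_mul, D.re_mul, D.re_mul, ← D.re_comp, ← D.re_comp,
        ← D.re_comp, ← D.re_comp, ← D.re_comp, ← D.re_comp,
        aux_trA12, aux_trA23, aux_trA13, aux_trB12, aux_trB23, aux_trB13,
        D.re_comp, D.re_comp, D.re_comp, D.re_comp, D.re_comp, D.re_comp,
        PLD.mul_mul_mul_comm D]
      exact D.mul_mono hA hB
    · -- affine
      calc boxProd D ρ σ ≤ D.mul (D.unit _) (D.unit _) :=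
            D.mul_mono (PLD.re_unit_le D _ hρa) (PLD.re_unit_le D _ hσa)
        _ = _ := D.mul_unit _
    · -- fst tracked by 1
      unfold Tracks
      rw [aux_map13]
      exact le_trans (G.bang_counit _) box_le_l
    · -- snd tracked by 1
      unfold Tracks
      rw [aux_map24]
      exact le_trans (G.bang_counit _) box_le_r
    · -- pairing
      intro Z τ _ _ f g r s hf hg
      unfold Tracks
      rw [boxProd, D.re_mul, ← D.re_comp, ← D.re_comp, aux_lift_map13, aux_lift_map24]
      calc G.bang (r + s) τ ≤ D.mul (G.bang r τ) (G.bang s τ) := G.bang_add r s τ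
        _ ≤ _ := D.mul_mono hf hg
end

section
/- Let (P, !) be an R-graded doctrine and ρ an affine P-distance on an object A. Then the R-graded descent data Des_ρ(A) contain κ_A (with 0 ⊩_ρ κ), are closed under ∗ (if r ⊩_ρ α and s ⊩_ρ β then (r+s) ⊩_ρ (α ∗ β)), and are closed under the modality (if s ⊩_ρ α and r ∈ |R| then (r·s) ⊩_ρ !_r α). Moreover ρ itself belongs to Des_{ρ⊠ρ}(A×A), with 1 ⊩_{ρ⊠ρ} ρ. -/
open CategoryTheory CategoryTheory.Limits

universe w v u

variable {C : Type u} [Category.{v} C]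

variable [HasFiniteProducts C]

/-- descent data contain `κ_A` (with grade `0`), are closed under `∗`
(adding the grades) and under the modality (multiplying the grades); moreover `ρ`
itself is a descent datum over `(A × A, ρ ⊠ ρ)` with grade `1`. -/
theorem statement14 {R : Type*} [ResourceSemiring R]
    {P : C → Type w} [∀ X, PartialOrder (P X)] (G : GradedDoctrine R P)
    {A : C} (ρ : P (A ⨯ A)) (hρ : IsDistance G.toPLDoctrine A ρ)
    (hρa : IsAffine G.toPLDoctrine ρ) :
    Forces G ρ 0 (G.unit A) ∧
    (∀ (α β : P A) (r s : R), Forces G ρ r α → Forces G ρ s β →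
      Forces G ρ (r + s) (G.mul α β)) ∧
    (∀ (α : P A) (r s : R), Forces G ρ s α → Forces G ρ (r * s) (G.bang r α)) ∧
    Forces G (boxProd G.toPLDoctrine ρ ρ) 1 ρ := by
  obtain ⟨href, hsym, htrans⟩ := hρ
  refine ⟨?_, ?_, ?_, ?_⟩
  · unfold Forces
    rw [G.re_unit, G.re_unit, G.mul_comm, G.mul_unit]
    exact G.bang_zero ρ
  · intro α β r s hα hβ
    unfold Forces at *
    rw [G.re_mul, G.re_mul]
    calc G.mul (G.mul (G.re prod.fst α) (G.re prod.fst β)) (G.bang (r + s) ρ)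
        ≤ G.mul (G.mul (G.re prod.fst α) (G.re prod.fst β))
            (G.mul (G.bang r ρ) (G.bang s ρ)) :=
          G.mul_mono le_rfl (G.bang_add r s ρ)
      _ = G.mul (G.mul (G.re prod.fst α) (G.bang r ρ))
            (G.mul (G.re prod.fst β) (G.bang s ρ)) := by
          rw [G.mul_assoc, G.mul_assoc]
          congr 1
          rw [← G.mul_assoc, ← G.mul_assoc]
          congr 1
          exact G.mul_comm _ _
      _ ≤ G.mul (G.re prod.snd α) (G.re prod.snd β) := G.mul_mono hα hβ
  · intro α r s hα
    unfold Forces at *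
    rw [G.bang_natural, G.bang_natural]
    calc G.mul (G.bang r (G.re prod.fst α)) (G.bang (r * s) ρ)
        ≤ G.mul (G.bang r (G.re prod.fst α)) (G.bang r (G.bang s ρ)) :=
          G.mul_mono le_rfl (G.bang_comul r s ρ)
      _ ≤ G.bang r (G.mul (G.re prod.fst α) (G.bang s ρ)) := G.bang_mul r _ _
      _ ≤ G.bang r (G.re prod.snd α) := G.bang_mono r hα
  · unfold Forces boxProd
    set a : (A ⨯ A) ⨯ (A ⨯ A) ⟶ A := prod.fst ≫ prod.fst with ha
    set b : (A ⨯ A) ⨯ (A ⨯ A) ⟶ A := prod.fst ≫ prod.snd with hb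
    set a' : (A ⨯ A) ⨯ (A ⨯ A) ⟶ A := prod.snd ≫ prod.fst with ha'
    set b' : (A ⨯ A) ⨯ (A ⨯ A) ⟶ A := prod.snd ≫ prod.snd with hb'
    set g₁ : (A ⨯ A) ⨯ (A ⨯ A) ⟶ (A ⨯ A) ⨯ A := prod.lift (prod.lift a' a) b with hg₁
    set g₂ : (A ⨯ A) ⨯ (A ⨯ A) ⟶ (A ⨯ A) ⨯ A := prod.lift (prod.lift a' b) b' with hg₂
    have h1 : g₁ ≫ proj12 A A A = prod.lift a' a := by
      apply Limits.prod.hom_ext <;> simp only [hg₁, proj12, ha, hb, ha', hb', Category.assoc, prod.lift_fst, prod.lift_snd, prod.comp_lift, prod.lift_fst_assoc, prod.lift_snd_assoc]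
    have h2 : g₁ ≫ proj23 A A A = (prod.fst : (A ⨯ A) ⨯ (A ⨯ A) ⟶ A ⨯ A) := by
      apply Limits.prod.hom_ext <;> simp only [hg₁, proj23, ha, hb, ha', hb', Category.assoc, prod.lift_fst, prod.lift_snd, prod.comp_lift, prod.lift_fst_assoc, prod.lift_snd_assoc]
    have h3 : g₁ ≫ proj13 A A A = prod.lift a' b := by
      apply Limits.prod.hom_ext <;> simp only [hg₁, proj13, ha, hb, ha', hb', Category.assoc, prod.lift_fst, prod.lift_snd, prod.comp_lift, prod.lift_fst_assoc, prod.lift_snd_assoc]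
    have h4 : g₂ ≫ proj12 A A A = prod.lift a' b := by
      apply Limits.prod.hom_ext <;> simp only [hg₂, proj12, ha, hb, ha', hb', Category.assoc, prod.lift_fst, prod.lift_snd, prod.comp_lift, prod.lift_fst_assoc, prod.lift_snd_assoc]
    have h5 : g₂ ≫ proj23 A A A = proj24' A A A A := by
      apply Limits.prod.hom_ext <;> simp only [hg₂, proj23, proj24', ha, hb, ha', hb', Category.assoc, prod.lift_fst, prod.lift_snd, prod.comp_lift, prod.lift_fst_assoc, prod.lift_snd_assoc]
    have h6 : g₂ ≫ proj13 A A A = (prod.snd : (A ⨯ A) ⨯ (A ⨯ A) ⟶ A ⨯ A) := by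
      apply Limits.prod.hom_ext <;> simp only [hg₂, proj13, ha, hb, ha', hb', Category.assoc, prod.lift_fst, prod.lift_snd, prod.comp_lift, prod.lift_fst_assoc, prod.lift_snd_assoc]
    have hswap : proj13' A A A A ≫ prod.lift prod.snd prod.fst = prod.lift a' a := by
      apply Limits.prod.hom_ext <;> simp [proj13', ha, ha']
    have t1 : G.mul (G.re (prod.lift a' a) ρ) (G.re (prod.fst : (A ⨯ A) ⨯ (A ⨯ A) ⟶ A ⨯ A) ρ)
        ≤ G.re (prod.lift a' b) ρ := by
      have := G.re_mono g₁ htrans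
      rw [G.re_mul, ← G.re_comp, ← G.re_comp, ← G.re_comp, h1, h2, h3] at this
      exact this
    have t2 : G.mul (G.re (prod.lift a' b) ρ) (G.re (proj24' A A A A) ρ)
        ≤ G.re (prod.snd : (A ⨯ A) ⨯ (A ⨯ A) ⟶ A ⨯ A) ρ := by
      have := G.re_mono g₂ htrans
      rw [G.re_mul, ← G.re_comp, ← G.re_comp, ← G.re_comp, h4, h5, h6] at this
      exact this
    have s1 : G.re (proj13' A A A A) ρ ≤ G.re (prod.lift a' a) ρ := by
      have := G.re_mono (proj13' A A A A) hsym
      rw [← G.re_comp, hswap] at this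
      exact this
    calc G.mul (G.re (prod.fst : (A ⨯ A) ⨯ (A ⨯ A) ⟶ A ⨯ A) ρ)
          (G.bang 1 (G.mul (G.re (proj13' A A A A) ρ) (G.re (proj24' A A A A) ρ)))
        ≤ G.mul (G.re (prod.fst : (A ⨯ A) ⨯ (A ⨯ A) ⟶ A ⨯ A) ρ)
            (G.mul (G.re (proj13' A A A A) ρ) (G.re (proj24' A A A A) ρ)) :=
          G.mul_mono le_rfl (G.bang_counit _)
      _ = G.mul (G.mul (G.re (proj13' A A A A) ρ)
            (G.re (prod.fst : (A ⨯ A) ⨯ (A ⨯ A) ⟶ A ⨯ A) ρ)) (G.re (proj24' A A A A) ρ) := by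
          rw [← G.mul_assoc]
          congr 1
          exact G.mul_comm _ _
      _ ≤ G.mul (G.mul (G.re (prod.lift a' a) ρ)
            (G.re (prod.fst : (A ⨯ A) ⨯ (A ⨯ A) ⟶ A ⨯ A) ρ)) (G.re (proj24' A A A A) ρ) :=
          G.mul_mono (G.mul_mono s1 le_rfl) le_rfl
      _ ≤ G.mul (G.re (prod.lift a' b) ρ) (G.re (proj24' A A A A) ρ) :=
          G.mul_mono t1 le_rfl
      _ ≤ G.re (prod.snd : (A ⨯ A) ⨯ (A ⨯ A) ⟶ A ⨯ A) ρ := t2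
end

section
/- Let (P, !) be an R-graded doctrine, ρ an affine P-distance on A and σ an affine P-distance on B, and f : A → B an arrow of the base tracked by s ∈ |R| (i.e. !_s ρ ≤ P(f×f)(σ)). If β ∈ P(B) satisfies r ⊩_σ β, then (r·s) ⊩_ρ P(f)(β); in particular, reindexing along arrows of Met(P, !) maps Des_σ(B) into Des_ρ(A). -/
open CategoryTheory CategoryTheory.Limits

universe w v u

variable {C : Type u} [Category.{v} C]

variable [HasFiniteProducts C]

/-- if `s` tracks `f : (A,ρ) → (B,σ)` and `r ⊩_σ β`, then
`r·s ⊩_ρ P(f)(β)`; in particular reindexing along arrows of `Met(P,!)` maps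
`Des_σ(B)` into `Des_ρ(A)`. -/
theorem statement15 {R : Type*} [ResourceSemiring R]
    {P : C → Type w} [∀ X, PartialOrder (P X)] (G : GradedDoctrine R P)
    {A B : C} (ρ : P (A ⨯ A)) (σ : P (B ⨯ B))
    (hρ : IsDistance G.toPLDoctrine A ρ) (hρa : IsAffine G.toPLDoctrine ρ)
    (hσ : IsDistance G.toPLDoctrine B σ) (hσa : IsAffine G.toPLDoctrine σ)
    (f : A ⟶ B) (s : R) (hf : Tracks G ρ σ f s) :
    (∀ (β : P B) (r : R), Forces G σ r β → Forces G ρ (r * s) (G.re f β)) ∧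
    (∀ β : P B, β ∈ DescentData G σ → G.re f β ∈ DescentData G ρ) := by
  have main : ∀ (β : P B) (r : R), Forces G σ r β → Forces G ρ (r * s) (G.re f β) := by
    intro β r hβ
    unfold Forces at hβ ⊢
    have h1 : G.bang (r * s) ρ ≤ G.re (prod.map f f) (G.bang r σ) := by
      calc G.bang (r * s) ρ ≤ G.bang r (G.bang s ρ) := G.bang_comul r s ρ
        _ ≤ G.bang r (G.re (prod.map f f) σ) := G.bang_mono r hf
        _ = G.re (prod.map f f) (G.bang r σ) := (G.bang_natural r _ σ).symm
    have e1 : G.re (prod.fst : A ⨯ A ⟶ A) (G.re f β)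
        = G.re (prod.map f f) (G.re (prod.fst : B ⨯ B ⟶ B) β) := by
      rw [← G.re_comp, ← G.re_comp, prod.map_fst]
    have e2 : G.re (prod.snd : A ⨯ A ⟶ A) (G.re f β)
        = G.re (prod.map f f) (G.re (prod.snd : B ⨯ B ⟶ B) β) := by
      rw [← G.re_comp, ← G.re_comp, prod.map_snd]
    calc G.mul (G.re (prod.fst : A ⨯ A ⟶ A) (G.re f β)) (G.bang (r * s) ρ)
        ≤ G.mul (G.re (prod.map f f) (G.re (prod.fst : B ⨯ B ⟶ B) β))
            (G.re (prod.map f f) (G.bang r σ)) := by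
          rw [e1]; exact G.mul_mono le_rfl h1
      _ = G.re (prod.map f f) (G.mul (G.re (prod.fst : B ⨯ B ⟶ B) β) (G.bang r σ)) :=
          (G.re_mul _ _ _).symm
      _ ≤ G.re (prod.map f f) (G.re (prod.snd : B ⨯ B ⟶ B) β) := G.re_mono _ hβ
      _ = G.re (prod.snd : A ⨯ A ⟶ A) (G.re f β) := e2.symm
  exact ⟨main, fun β ⟨r, hr⟩ => ⟨r * s, main β r hr⟩⟩
end

section
/- Let (P, !, δ) be an R-Lipschitz doctrine and let A be an object of the base such that δ_A is !-intuitionistic. Then δ_A satisfies the (ungraded) elementary substitutivity condition: for every object X and every α ∈ P(X×A), P(⟨π₁,π₂⟩)(α) ∗ P(⟨π₂,π₃⟩)(δ_A) ≤ P(⟨π₁,π₃⟩)(α) holds in P(X×A×A). Consequently, the full subcategory of the base on objects A with δ_A !-intuitionistic is closed under finite products, and the restriction of P to this subcategory is an elementary primary linear doctrine with equality predicates given by δ. -/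
open CategoryTheory CategoryTheory.Limits

universe w v u

variable {C : Type u} [Category.{v} C]

variable [HasFiniteProducts C]

/-- in an `R`-Lipschitz doctrine, if `δ_A` is `!`-intuitionistic then
it satisfies the ungraded elementary substitutivity condition; consequently the
objects with `!`-intuitionistic distance are closed under finite products and the
restriction of `P` to them is an elementary primary linear doctrine with equality
predicates `δ`. -/
theorem statement16 {R : Type*} [ResourceSemiring R]
    {P : C → Type w} [∀ X, PartialOrder (P X)] (G : GradedDoctrine R P)
    (δ : ∀ A : C, P (A ⨯ A)) (hLip : IsLipschitz G δ) :
    (∀ A : C, IsIntuitionistic G (δ A) →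
      ∀ (X : C) (α : P (X ⨯ A)),
        G.mul (G.re (proj12 X A A) α) (G.re (proj23 X A A) (δ A)) ≤
          G.re (proj13 X A A) α) ∧
    IsIntuitionistic G (δ (⊤_ C)) ∧
    (∀ A B : C, IsIntuitionistic G (δ A) → IsIntuitionistic G (δ B) →
      IsIntuitionistic G (δ (A ⨯ B))) ∧
    (∀ A : C, IsIntuitionistic G (δ A) → G.unit A ≤ G.re (diag A) (δ A)) := by
  refine ⟨?_, ?_, ?_, ?_⟩
  · intro A hA X α
    obtain ⟨r, hr⟩ := hLip.subst X A α
    refine le_trans ?_ hr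
    apply G.mul_mono le_rfl
    rw [← G.bang_natural]
    exact G.re_mono _ (hA r)
  · intro r
    rw [hLip.unit_eq]
    exact G.bang_unit r _
  · intro A B hA hB r
    rw [hLip.prod_eq]
    refine le_trans (G.mul_mono ?_ ?_) (G.bang_mul r _ _)
    · rw [← G.bang_natural]; exact G.re_mono _ (hA r)
    · rw [← G.bang_natural]; exact G.re_mono _ (hB r)
  · intro A _
    exact (hLip.dist A).refl
end

section
/- Let (P, !) be an R-graded doctrine that is multiplicative, and let ρ be an affine P-distance on an object A. If α, β ∈ P(A) satisfy r ⊩_ρ α and s ⊩_ρ β, then (r+s) ⊩_ρ (α ⊸ β); hence the R-graded descent data Des_ρ(A) are closed under the linear implication ⊸. -/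
open CategoryTheory CategoryTheory.Limits

universe w v u

variable {C : Type u} [Category.{v} C]

variable [HasFiniteProducts C]

/-- in a multiplicative `R`-graded doctrine, if `r ⊩_ρ α` and
`s ⊩_ρ β` then `(r+s) ⊩_ρ (α ⊸ β)`; hence descent data are closed under `⊸`. -/
theorem statement17 {R : Type*} [ResourceSemiring R]
    {P : C → Type w} [∀ X, PartialOrder (P X)] (G : GradedDoctrine R P)
    (limp : ∀ {X : C}, P X → P X → P X)
    (hadj : ∀ (X : C) (α β γ : P X), γ ≤ limp α β ↔ G.mul γ α ≤ β)
    (hre : ∀ (X Y : C) (f : X ⟶ Y) (α β : P Y),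
      G.re f (limp α β) = limp (G.re f α) (G.re f β))
    {A : C} (ρ : P (A ⨯ A)) (hρ : IsDistance G.toPLDoctrine A ρ)
    (hρa : IsAffine G.toPLDoctrine ρ) :
    (∀ (α β : P A) (r s : R), Forces G ρ r α → Forces G ρ s β →
      Forces G ρ (r + s) (limp α β)) ∧
    (∀ α β : P A, α ∈ DescentData G ρ → β ∈ DescentData G ρ →
      limp α β ∈ DescentData G ρ) := by
  have lcomm : ∀ {X : C} (a b c : P X), G.mul a (G.mul b c) = G.mul b (G.mul a c) := by
    intro X a b c
    rw [← G.mul_assoc, G.mul_comm a b, G.mul_assoc]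
  have main : ∀ (α β : P A) (r s : R), Forces G ρ r α → Forces G ρ s β →
      Forces G ρ (r + s) (limp α β) := by
    intro α β r s hα hβ
    set fst := (prod.fst : A ⨯ A ⟶ A)
    set snd := (prod.snd : A ⨯ A ⟶ A)
    set sw : A ⨯ A ⟶ A ⨯ A := prod.lift prod.snd prod.fst with hsw
    have hswf : sw ≫ fst = snd := prod.lift_fst _ _
    have hsws : sw ≫ snd = fst := prod.lift_snd _ _
    -- reversed forcing for α
    have hα' : G.mul (G.re snd α) (G.bang r ρ) ≤ G.re fst α := by
      have h1 := G.re_mono sw hα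
      rw [G.re_mul, ← G.re_comp, ← G.re_comp, hswf, hsws, G.bang_natural] at h1
      calc G.mul (G.re snd α) (G.bang r ρ)
          ≤ G.mul (G.re snd α) (G.bang r (G.re sw ρ)) :=
            G.mul_mono le_rfl (G.bang_mono r hρ.symm)
        _ ≤ G.re fst α := h1
    have key1 : G.mul (G.re fst (limp α β)) (G.re fst α) ≤ G.re fst β := by
      rw [hre]
      exact (hadj _ _ _ _).mp le_rfl
    unfold Forces
    rw [hre _ _ snd]
    refine (hadj _ _ _ _).mpr ?_
    calc G.mul (G.mul (G.re fst (limp α β)) (G.bang (r + s) ρ)) (G.re snd α)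
        ≤ G.mul (G.mul (G.re fst (limp α β)) (G.mul (G.bang r ρ) (G.bang s ρ)))
            (G.re snd α) :=
          G.mul_mono (G.mul_mono le_rfl (G.bang_add r s ρ)) le_rfl
      _ = G.mul (G.mul (G.re fst (limp α β)) (G.bang s ρ))
            (G.mul (G.re snd α) (G.bang r ρ)) := by
          simp only [G.mul_assoc]
          rw [lcomm (G.bang r ρ), G.mul_comm (G.bang r ρ)]
      _ ≤ G.mul (G.mul (G.re fst (limp α β)) (G.bang s ρ)) (G.re fst α) :=
          G.mul_mono le_rfl hα'
      _ = G.mul (G.mul (G.re fst (limp α β)) (G.re fst α)) (G.bang s ρ) := by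
          rw [G.mul_assoc, G.mul_assoc, G.mul_comm (G.bang s ρ)]
      _ ≤ G.mul (G.re fst β) (G.bang s ρ) := G.mul_mono key1 le_rfl
      _ ≤ G.re snd β := hβ
  refine ⟨main, ?_⟩
  rintro α β ⟨r, hα⟩ ⟨s, hβ⟩
  exact ⟨r + s, main α β r s hα hβ⟩
end
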